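/- arXiv:2511.19411 — 6 statements merged into one kernel-verified Lean document; each statement's English description precedes it below -/
import Mathlib

section
/- For every positive integer t, ⌊m⌋ · ∑_{k=0}^{t−1} Θ_k (1 − U_k) ≤ ∑_{k=0}^{t−1} (1 − Θ_k)(1 − U_k); that is, ⌊m⌋ times the number of small successful iterations among the first t iterations is at most the number of small unsuccessful iterations among the first t iterations. -/
open Finset

lemma max0_add_one (x : ℝ) : max 0 (x + 1) ≤ max 0 x + 1 := by
  apply max_le
  · linarith [le_max_left (0:ℝ) x]
  · linarith [le_max_right (0:ℝ) x]

/-- ⌊m⌋ times the number of small successful iterations among the first t iterations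
is at most the number of small unsuccessful iterations among the first t iterations. -/
theorem small_successful_vs_unsuccessful
    (γinc γdec : ℝ) (hinc : 1 < γinc) (hdec0 : 0 < γdec) (hdec1 : γdec < 1)
    (m : ℝ) (hm : m = -Real.log γinc / Real.log γdec)
    (Θ : ℕ → ℝ) (hΘ : ∀ k, Θ k = 0 ∨ Θ k = 1)
    (α : ℕ → ℝ) (α₀ : ℝ) (hα₀ : 0 < α₀) (hinit : α 0 = α₀)
    (hrec : ∀ k, α (k + 1) = if Θ k = 1 then γinc * α k else γdec * α k)
    (abar : ℝ) (habar0 : 0 < abar) (habar : abar ≤ α₀)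
    (U : ℕ → ℝ)
    (hU : ∀ k, U k = if max (α k) (α (k + 1)) ≤ abar then 0 else 1)
    (t : ℕ) (ht : 0 < t) :
    (⌊m⌋ : ℝ) * ∑ k ∈ Finset.range t, Θ k * (1 - U k)
      ≤ ∑ k ∈ Finset.range t, (1 - Θ k) * (1 - U k) := by
  have hγinc0 : (0:ℝ) < γinc := lt_trans one_pos hinc
  have hαpos : ∀ k, 0 < α k := by
    intro k
    induction k with
    | zero => rw [hinit]; exact hα₀
    | succ k ih =>
      rw [hrec k]
      split
      · exact mul_pos hγinc0 ih
      · exact mul_pos hdec0 ih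
  have hlogdec : Real.log γdec < 0 := Real.log_neg hdec0 hdec1
  have hloginc : 0 < Real.log γinc := Real.log_pos hinc
  set c : ℝ := -Real.log γdec with hc
  have hcpos : 0 < c := by simp only [hc]; linarith
  have hld : Real.log γdec ≠ 0 := ne_of_lt hlogdec
  have hm' : m * c = Real.log γinc := by
    rw [hm, hc]; field_simp
  have hmpos : 0 < m := by nlinarith
  have hn0 : (0:ℝ) ≤ (⌊m⌋ : ℝ) := by
    exact_mod_cast Int.floor_nonneg.mpr hmpos.le
  set L : ℕ → ℝ := fun k => (Real.log abar - Real.log (α k)) / c with hL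
  have hL0 : L 0 ≤ 0 := by
    have : Real.log abar ≤ Real.log (α 0) := by
      rw [hinit]
      exact Real.log_le_log habar0 habar
    simp only [hL]
    apply div_nonpos_of_nonpos_of_nonneg <;> linarith
  have hLf : ∀ k, Θ k = 0 → L (k+1) = L k + 1 := by
    intro k h0
    have hα' : α (k+1) = γdec * α k := by rw [hrec k]; simp [h0]
    simp only [hL, hα', Real.log_mul (ne_of_gt hdec0) (ne_of_gt (hαpos k))]
    field_simp
    ring
  have hLs : ∀ k, Θ k = 1 → L (k+1) = L k - m := by
    intro k h1
    have hα' : α (k+1) = γinc * α k := by rw [hrec k]; simp [h1]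
    simp only [hL, hα', Real.log_mul (ne_of_gt hγinc0) (ne_of_gt (hαpos k))]
    rw [← hm']
    field_simp
    ring
  have hsmallf : ∀ k, (α k ≤ abar ↔ 0 ≤ L k) := by
    intro k
    simp only [hL]
    rw [le_div_iff₀ hcpos, zero_mul, sub_nonneg]
    exact ((Real.log_le_log_iff (hαpos k) habar0)).symm
  have hsmalls : ∀ k, (γinc * α k ≤ abar ↔ m ≤ L k) := by
    intro k
    simp only [hL]
    rw [le_div_iff₀ hcpos, hm']
    constructor
    · intro h
      have := (Real.log_le_log_iff (mul_pos hγinc0 (hαpos k)) habar0).mpr h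
      rw [Real.log_mul (ne_of_gt hγinc0) (ne_of_gt (hαpos k))] at this
      linarith
    · intro h
      have : Real.log (γinc * α k) ≤ Real.log abar := by
        rw [Real.log_mul (ne_of_gt hγinc0) (ne_of_gt (hαpos k))]
        linarith
      exact (Real.log_le_log_iff (mul_pos hγinc0 (hαpos k)) habar0).mp this
  have key : ∀ s : ℕ, (⌊m⌋ : ℝ) * (∑ k ∈ Finset.range s, Θ k * (1 - U k))
      + max 0 ((⌊L s⌋ : ℝ)) ≤ ∑ k ∈ Finset.range s, (1 - Θ k) * (1 - U k) := by
    intro s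
    induction s with
    | zero =>
      simp only [Finset.range_zero, Finset.sum_empty, mul_zero, zero_add]
      apply max_le le_rfl
      have : (⌊L 0⌋ : ℤ) ≤ 0 := Int.floor_nonpos hL0
      exact_mod_cast this
    | succ s ih =>
      rw [Finset.sum_range_succ, Finset.sum_range_succ]
      set S := ∑ k ∈ Finset.range s, Θ k * (1 - U k) with hS
      set F := ∑ k ∈ Finset.range s, (1 - Θ k) * (1 - U k) with hF
      rcases hΘ s with h0 | h1
      · -- unsuccessful iteration
        have hα' : α (s+1) = γdec * α s := by rw [hrec s]; simp [h0]
        have hmax : max (α s) (α (s+1)) = α s := by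
          rw [hα']
          exact max_eq_left (by nlinarith [hαpos s])
        have hL1 : L (s+1) = L s + 1 := hLf s h0
        have hfloor : (⌊L (s+1)⌋ : ℝ) = (⌊L s⌋ : ℝ) + 1 := by
          rw [hL1]
          have : ⌊L s + (1:ℝ)⌋ = ⌊L s⌋ + 1 := by
            exact_mod_cast Int.floor_add_intCast (L s) 1
          rw [this]; push_cast; ring
        rw [hfloor]
        by_cases hs : α s ≤ abar
        · -- small unsuccessful
          have hUt : U s = 0 := by rw [hU s, hmax, if_pos hs]
          have e1 : Θ s * (1 - U s) = 0 := by rw [h0, hUt]; ring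
          have e2 : (1 - Θ s) * (1 - U s) = 1 := by rw [h0, hUt]; ring
          rw [e1, e2, add_zero]
          have := max0_add_one ((⌊L s⌋ : ℝ))
          linarith
        · -- large unsuccessful
          have hUt : U s = 1 := by rw [hU s, hmax, if_neg hs]
          have e1 : Θ s * (1 - U s) = 0 := by rw [h0, hUt]; ring
          have e2 : (1 - Θ s) * (1 - U s) = 0 := by rw [h0, hUt]; ring
          rw [e1, e2, add_zero, add_zero]
          have hLneg : ¬ (0 ≤ L s) := fun h => hs ((hsmallf s).mpr h)
          have hfl : (⌊L s⌋ : ℝ) + 1 ≤ 0 := by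
            have : ⌊L s⌋ ≤ -1 := by
              have : ⌊L s⌋ < 0 := Int.floor_lt.mpr (by push_cast; linarith)
              omega
            have : (⌊L s⌋ : ℝ) ≤ -1 := by exact_mod_cast this
            linarith
          have hmx : max 0 ((⌊L s⌋ : ℝ) + 1) = 0 := max_eq_left hfl
          rw [hmx]
          linarith [le_max_left (0:ℝ) ((⌊L s⌋ : ℝ))]
      · -- successful iteration
        have hα' : α (s+1) = γinc * α s := by rw [hrec s]; simp [h1]
        have hmax : max (α s) (α (s+1)) = γinc * α s := by
          rw [hα']
          exact max_eq_right (by nlinarith [hαpos s])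
        have hL1 : L (s+1) = L s - m := hLs s h1
        by_cases hs : γinc * α s ≤ abar
        · -- small successful
          have hUt : U s = 0 := by rw [hU s, hmax, if_pos hs]
          have e1 : Θ s * (1 - U s) = 1 := by rw [h1, hUt]; ring
          have e2 : (1 - Θ s) * (1 - U s) = 0 := by rw [h1, hUt]; ring
          rw [e1, e2, add_zero]
          have hLm : m ≤ L s := (hsmalls s).mp hs
          have hκn : (⌊m⌋ : ℝ) ≤ (⌊L s⌋ : ℝ) := by
            exact_mod_cast Int.floor_le_floor hLm
          -- ⌊L s - m⌋ ≤ ⌊L s⌋ - ⌊m⌋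
          have hsub : (⌊L (s+1)⌋ : ℝ) ≤ (⌊L s⌋ : ℝ) - (⌊m⌋ : ℝ) := by
            have h1' : ⌊L (s+1)⌋ + ⌊m⌋ ≤ ⌊L s⌋ := by
              apply Int.le_floor.mpr
              push_cast
              rw [hL1]
              linarith [Int.floor_le (L s - m), Int.floor_le m]
            have : (⌊L (s+1)⌋ : ℝ) + (⌊m⌋ : ℝ) ≤ (⌊L s⌋ : ℝ) := by exact_mod_cast h1'
            linarith
          have hmaxκ : max 0 ((⌊L s⌋ : ℝ)) = (⌊L s⌋ : ℝ) := max_eq_right (by linarith)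
          have hmaxκ' : max 0 ((⌊L (s+1)⌋ : ℝ)) ≤ (⌊L s⌋ : ℝ) - (⌊m⌋ : ℝ) := by
            apply max_le (by linarith) hsub
          have e3 : (⌊m⌋ : ℝ) * (S + 1) = (⌊m⌋ : ℝ) * S + (⌊m⌋ : ℝ) := by ring
          rw [e3]
          rw [hmaxκ] at ih
          linarith
        · -- large successful
          have hUt : U s = 1 := by rw [hU s, hmax, if_neg hs]
          have e1 : Θ s * (1 - U s) = 0 := by rw [h1, hUt]; ring
          have e2 : (1 - Θ s) * (1 - U s) = 0 := by rw [h1, hUt]; ring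
          rw [e1, e2, add_zero, add_zero]
          have hLm : ¬ (m ≤ L s) := fun h => hs ((hsmalls s).mpr h)
          have hfl : (⌊L (s+1)⌋ : ℝ) ≤ 0 := by
            have : ⌊L (s+1)⌋ ≤ -1 := by
              have : ⌊L (s+1)⌋ < 0 := Int.floor_lt.mpr (by rw [hL1]; push_cast; linarith)
              omega
            have : (⌊L (s+1)⌋ : ℝ) ≤ -1 := by exact_mod_cast this
            linarith
          have hmx : max 0 ((⌊L (s+1)⌋ : ℝ)) = 0 := max_eq_left hfl
          rw [hmx]
          linarith [le_max_left (0:ℝ) ((⌊L s⌋ : ℝ))]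
  have := key t
  have hge : (0:ℝ) ≤ max 0 ((⌊L t⌋ : ℝ)) := le_max_left 0 _
  linarith
end

section
/- For every positive integer t, ∑_{k=0}^{t−1} I_k ≤ (⌊m⌋/(⌊m⌋+1)) ∑_{k=0}^{t−1} U_k Θ_k + (⌊m⌋/(⌊m⌋+1)) ∑_{k=0}^{t−1} U_k (1 − Θ_k) + t/(⌊m⌋+1). -/
/-!
Measure the step size by its depth `x k = log_{γdec} (α k / ᾱ)`: a failure raises the depth by `1`,
a success lowers it by `m`, the walk starts at depth `≤ 0`, and an iteration is small exactly when
both of its endpoints have depth `≥ 0`. The integer potential `⌊x k⌋₊` starts at `0` and never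
becomes negative; it rises by at most `1` on a small failure, drops by at least `⌊m⌋` on a small
success, and does not rise on a large iteration (a large failure starts at negative depth, so it
ends below depth `1`). Hence `⌊m⌋ · #(small successes) ≤ #(small failures)`. Since every true
iteration is large or a small success, and the large iterations, small successes and small failures
together number `t`, the bound follows.
-/

open Finset

section Floor

variable {R : Type*} [CommRing R] [LinearOrder R] [IsStrictOrderedRing R] [FloorSemiring R]

lemma Nat.floor_add_one_le_succ (x : R) : ⌊x + 1⌋₊ ≤ ⌊x⌋₊ + 1 := by
  rcases le_or_gt 0 x with hx | hx
  · exact (Nat.floor_add_one hx).le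
  · simp [Nat.floor_eq_zero.2 (by linarith : x + 1 < 1)]

lemma Nat.floor_sub_add_le {x m : R} {n : ℕ} (hnm : (n : R) ≤ m) (h : 0 ≤ x - m) :
    ⌊x - m⌋₊ + n ≤ ⌊x⌋₊ := by
  rw [← Nat.floor_add_natCast h]
  exact Nat.floor_le_floor (by linarith)

end Floor

lemma sum_add_le_sum_add_of_potential {a b Φ : ℕ → ℝ}
    (hstep : ∀ k, a k + Φ (k + 1) ≤ b k + Φ k) (t : ℕ) :
    ∑ k ∈ range t, a k + Φ t ≤ ∑ k ∈ range t, b k + Φ 0 := by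
  induction t with
  | zero => simp
  | succ t ih =>
    rw [sum_range_succ, sum_range_succ]
    linarith [hstep t]

section Walk

variable {m : ℝ} {n : ℕ}

lemma walk_potential_step (hnm : (n : ℝ) ≤ m) {x y θ u : ℝ} (hθ : θ = 0 ∨ θ = 1)
    (hy : y = if θ = 1 then x - m else x + 1) (hu : u = if 0 ≤ x ∧ 0 ≤ y then 0 else 1) :
    n * ((1 - u) * θ) + ⌊y⌋₊ ≤ (1 - u) * (1 - θ) + ⌊x⌋₊ := by
  rcases hθ with rfl | rfl <;> simp only [zero_ne_one, if_true, if_false] at hy <;> subst hy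
  · by_cases hsmall : 0 ≤ x ∧ 0 ≤ x + 1
    · have : (⌊x + 1⌋₊ : ℝ) ≤ ⌊x⌋₊ + 1 := mod_cast Nat.floor_add_one_le_succ x
      rw [hu, if_pos hsmall]
      linarith
    · have hx : x < 0 := not_le.1 fun hx => hsmall ⟨hx, by linarith⟩
      rw [hu, if_neg hsmall, Nat.floor_eq_zero.2 (by linarith : x + 1 < 1)]
      simp
  · by_cases hsmall : 0 ≤ x ∧ 0 ≤ x - m
    · have : (⌊x - m⌋₊ + n : ℝ) ≤ ⌊x⌋₊ := mod_cast Nat.floor_sub_add_le hnm hsmall.2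
      rw [hu, if_pos hsmall]
      linarith
    · have hm : 0 ≤ m := n.cast_nonneg.trans hnm
      have : (⌊x - m⌋₊ : ℝ) ≤ ⌊x⌋₊ := mod_cast Nat.floor_le_floor (by linarith)
      rw [hu, if_neg hsmall]
      linarith

theorem walk_count_small_success_le (hnm : (n : ℝ) ≤ m) (x Θ U : ℕ → ℝ)
    (hΘ : ∀ k, Θ k = 0 ∨ Θ k = 1) (hx0 : x 0 ≤ 0)
    (hx : ∀ k, x (k + 1) = if Θ k = 1 then x k - m else x k + 1)
    (hU : ∀ k, U k = if 0 ≤ x k ∧ 0 ≤ x (k + 1) then 0 else 1) (t : ℕ) :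
    n * ∑ k ∈ range t, (1 - U k) * Θ k ≤ ∑ k ∈ range t, (1 - U k) * (1 - Θ k) := by
  have hpot := sum_add_le_sum_add_of_potential (Φ := fun k => (⌊x k⌋₊ : ℝ))
    (fun k => walk_potential_step hnm (hΘ k) (hx k) (hU k)) t
  have hΦ0 : ⌊x 0⌋₊ = 0 := Nat.floor_eq_zero.2 (by linarith)
  rw [← mul_sum, hΦ0, Nat.cast_zero] at hpot
  linarith [(⌊x t⌋₊).cast_nonneg (α := ℝ)]

end Walk

theorem stepSize_count_small_success_le {γinc γdec abar : ℝ} {n : ℕ}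
    (hinc : 0 < γinc) (hdec0 : 0 < γdec) (hdec1 : γdec < 1)
    (hnm : (n : ℝ) ≤ -Real.log γinc / Real.log γdec) (Θ α U : ℕ → ℝ)
    (hΘ : ∀ k, Θ k = 0 ∨ Θ k = 1) (hpos : ∀ k, 0 < α k)
    (hrec : ∀ k, α (k + 1) = if Θ k = 1 then γinc * α k else γdec * α k)
    (habar0 : 0 < abar) (habar : abar ≤ α 0)
    (hU : ∀ k, U k = if max (α k) (α (k + 1)) ≤ abar then 0 else 1) (t : ℕ) :
    n * ∑ k ∈ range t, (1 - U k) * Θ k ≤ ∑ k ∈ range t, (1 - U k) * (1 - Θ k) := by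
  set x : ℕ → ℝ := fun k => Real.logb γdec (α k / abar) with hx
  have hratio : ∀ k, 0 < α k / abar := fun k => div_pos (hpos k) habar0
  have hx_nonneg : ∀ k, 0 ≤ x k ↔ α k ≤ abar := fun k => by
    rw [hx, Real.logb_nonneg_iff_of_base_lt_one hdec0 hdec1 (hratio k), div_le_one habar0]
  have hx0 : x 0 ≤ 0 := by
    rw [hx, Real.logb_nonpos_iff_of_base_lt_one hdec0 hdec1 (hratio 0), one_le_div habar0]
    exact habar
  have hx_rec : ∀ k, x (k + 1) = if Θ k = 1 then x k - -Real.log γinc / Real.log γdec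
      else x k + 1 := fun k => by
    simp only [hx, hrec k]
    split_ifs
    · rw [mul_div_assoc, Real.logb_mul hinc.ne' (hratio k).ne', Real.logb]
      ring
    · rw [mul_div_assoc, Real.logb_mul hdec0.ne' (hratio k).ne',
        Real.logb_self_eq_one_iff.2 ⟨hdec0.ne', hdec1.ne, by linarith⟩]
      ring
  refine walk_count_small_success_le hnm x Θ U hΘ hx0 hx_rec (fun k => ?_) t
  simp only [hU k, max_le_iff, hx_nonneg]

lemma le_large_add_small_success {i u θ : ℝ} (hi : i = 0 ∨ i = 1) (hu : u = 0 ∨ u = 1)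
    (hθ : θ = 0 ∨ θ = 1) (hsmall : i = 1 → u = 0 → θ = 1) : i ≤ u + (1 - u) * θ := by
  rcases hi with rfl | rfl <;> rcases hu with rfl | rfl <;> rcases hθ with rfl | rfl <;> simp_all

theorem true_iterations_bound_general
    (γinc γdec : ℝ) (hinc : 1 < γinc) (hdec0 : 0 < γdec) (hdec1 : γdec < 1)
    (m : ℝ) (hm : m = -Real.log γinc / Real.log γdec)
    (Θ : ℕ → ℝ) (hΘ : ∀ k, Θ k = 0 ∨ Θ k = 1)
    (α : ℕ → ℝ) (α₀ : ℝ) (hα₀ : 0 < α₀) (hinit : α 0 = α₀)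
    (hrec : ∀ k, α (k + 1) = if Θ k = 1 then γinc * α k else γdec * α k)
    (abar : ℝ) (habar0 : 0 < abar) (habar : abar ≤ α₀)
    (U : ℕ → ℝ)
    (hU : ∀ k, U k = if max (α k) (α (k + 1)) ≤ abar then 0 else 1)
    (I : ℕ → ℝ) (hI : ∀ k, I k = 0 ∨ I k = 1)
    (hsmalltrue : ∀ k, I k = 1 → U k = 0 → Θ k = 1)
    (t : ℕ) :
    ∑ k ∈ Finset.range t, I k
      ≤ ((⌊m⌋ : ℝ) / ((⌊m⌋ : ℝ) + 1)) * ∑ k ∈ Finset.range t, U k * Θ k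
        + ((⌊m⌋ : ℝ) / ((⌊m⌋ : ℝ) + 1)) * ∑ k ∈ Finset.range t, U k * (1 - Θ k)
        + (t : ℝ) / ((⌊m⌋ : ℝ) + 1) := by
  have hm0 : 0 ≤ m := hm ▸ div_nonneg_of_nonpos (by linarith [Real.log_pos hinc])
    (Real.log_nonpos hdec0.le hdec1.le)
  have hpos : ∀ k, 0 < α k := fun k => by
    induction k with
    | zero => exact hinit ▸ hα₀
    | succ k ih => rw [hrec k]; split_ifs <;> positivity
  have hsmall := stepSize_count_small_success_le (n := ⌊m⌋₊) (by linarith) hdec0 hdec1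
    (hm ▸ Nat.floor_le hm0) Θ α U hΘ hpos hrec habar0 (hinit ▸ habar) hU t
  have hU01 : ∀ k, U k = 0 ∨ U k = 1 := fun k => by rw [hU k]; split_ifs <;> simp
  have htrue : ∑ k ∈ range t, I k
      ≤ ∑ k ∈ range t, (U k * Θ k + U k * (1 - Θ k) + (1 - U k) * Θ k) :=
    sum_le_sum fun k _ =>
      (le_large_add_small_success (hI k) (hU01 k) (hΘ k) (hsmalltrue k)).trans_eq (by ring)
  have htotal : ∑ k ∈ range t,
      (U k * Θ k + U k * (1 - Θ k) + (1 - U k) * Θ k + (1 - U k) * (1 - Θ k)) = t := by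
    simp [show ∀ k, U k * Θ k + U k * (1 - Θ k) + (1 - U k) * Θ k + (1 - U k) * (1 - Θ k) = 1
      from fun k => by ring]
  simp only [sum_add_distrib] at htrue htotal
  rw [← natCast_floor_eq_intCast_floor hm0, div_mul_eq_mul_div, div_mul_eq_mul_div,
    ← add_div, ← add_div, le_div_iff₀ (by positivity)]
  linarith [mul_le_mul_of_nonneg_left htrue (Nat.cast_nonneg (α := ℝ) ⌊m⌋₊)]

/-- Bound on the number of true iterations among the first t iterations. -/
theorem true_iterations_bound
    (γinc γdec : ℝ) (hinc : 1 < γinc) (hdec0 : 0 < γdec) (hdec1 : γdec < 1)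
    (m : ℝ) (hm : m = -Real.log γinc / Real.log γdec)
    (Θ : ℕ → ℝ) (hΘ : ∀ k, Θ k = 0 ∨ Θ k = 1)
    (α : ℕ → ℝ) (α₀ : ℝ) (hα₀ : 0 < α₀) (hinit : α 0 = α₀)
    (hrec : ∀ k, α (k + 1) = if Θ k = 1 then γinc * α k else γdec * α k)
    (abar : ℝ) (habar0 : 0 < abar) (habar : abar ≤ α₀)
    (U : ℕ → ℝ)
    (hU : ∀ k, U k = if max (α k) (α (k + 1)) ≤ abar then 0 else 1)
    (I : ℕ → ℝ) (hI : ∀ k, I k = 0 ∨ I k = 1)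
    (hsmalltrue : ∀ k, I k = 1 → U k = 0 → Θ k = 1)
    (t : ℕ) (ht : 0 < t) :
    ∑ k ∈ Finset.range t, I k
      ≤ ((⌊m⌋ : ℝ) / ((⌊m⌋ : ℝ) + 1)) * ∑ k ∈ Finset.range t, U k * Θ k
        + ((⌊m⌋ : ℝ) / ((⌊m⌋ : ℝ) + 1)) * ∑ k ∈ Finset.range t, U k * (1 - Θ k)
        + (t : ℝ) / ((⌊m⌋ : ℝ) + 1) :=
  true_iterations_bound_general γinc γdec hinc hdec0 hdec1 m hm Θ hΘ α α₀ hα₀ hinit hrec abar habar0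
    habar U hU I hI hsmalltrue t
end

section
/- For every positive integer t, ∑_{k=0}^{t−1} I_k ≤ m · (Z_0 + ∑_{k=0}^{t−1} N_k)/h + (m/(m+1)) · ⌈(ln ᾱ − ln α_0)/ln γ_dec⌉ + t/(m+1). -/
open Finset

open Classical in
noncomputable def expo (Θ : ℕ → ℝ) (m : ℕ) : ℕ → ℤ
  | 0 => 0
  | k + 1 => if Θ k = 1 then expo Θ m k - m else expo Θ m k + 1

/-- Key inequality for the iteration complexity bound (with m a positive integer). -/
theorem key_inequality
    (γinc γdec : ℝ) (hinc : 1 < γinc) (hdec0 : 0 < γdec) (hdec1 : γdec < 1)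
    (m : ℕ) (hm0 : 0 < m) (hm : (m : ℝ) = -Real.log γinc / Real.log γdec)
    (Θ : ℕ → ℝ) (hΘ : ∀ k, Θ k = 0 ∨ Θ k = 1)
    (α : ℕ → ℝ) (α₀ : ℝ) (hα₀ : 0 < α₀) (hinit : α 0 = α₀)
    (hrec : ∀ k, α (k + 1) = if Θ k = 1 then γinc * α k else γdec * α k)
    (abar : ℝ) (habar0 : 0 < abar) (habar : abar ≤ α₀)
    (U : ℕ → ℝ)
    (hU : ∀ k, U k = if max (α k) (α (k + 1)) ≤ abar then 0 else 1)
    (I : ℕ → ℝ) (hI : ∀ k, I k = 0 ∨ I k = 1)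
    (hsmalltrue : ∀ k, I k = 1 → U k = 0 → Θ k = 1)
    (εf h : ℝ) (hεf : 0 ≤ εf) (hh : 0 < h)
    (E Ep : ℕ → ℝ) (hE : ∀ k, 0 ≤ E k) (hEp : ∀ k, 0 ≤ Ep k)
    (Z : ℕ → ℝ) (hZ : ∀ k, 0 ≤ Z k)
    (hup : ∀ k, Z (k + 1) ≤ Z k + (2 * εf + E k + Ep k))
    (hdown : ∀ k, U k = 1 → Θ k = 1 →
      Z (k + 1) ≤ Z k - (h - (2 * εf + E k + Ep k)))
    (t : ℕ) (ht : 0 < t) :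
    ∑ k ∈ Finset.range t, I k
      ≤ (m : ℝ) * ((Z 0 + ∑ k ∈ Finset.range t, (2 * εf + E k + Ep k)) / h)
        + ((m : ℝ) / ((m : ℝ) + 1)) * (⌈(Real.log abar - Real.log α₀) / Real.log γdec⌉ : ℝ)
        + (t : ℝ) / ((m : ℝ) + 1) := by
  classical
  set e : ℕ → ℤ := expo Θ m with he
  set C : ℤ := ⌈(Real.log abar - Real.log α₀) / Real.log γdec⌉ with hCdef
  have hlogdec_neg : Real.log γdec < 0 := Real.log_neg hdec0 hdec1
  have hlogdec_ne : Real.log γdec ≠ 0 := ne_of_lt hlogdec_neg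
  have hinc0 : (0:ℝ) < γinc := lt_trans zero_lt_one hinc
  -- γinc = γdec ^ (-m)
  have hγinc : γinc = γdec ^ (-(m:ℤ)) := by
    have h1 : Real.log γinc = (-(m:ℤ) : ℝ) * Real.log γdec := by
      have h2 : (m : ℝ) * Real.log γdec = -Real.log γinc := by
        rw [hm]; field_simp
      push_cast
      linarith
    have h3 : Real.log γinc = Real.log (γdec ^ (-(m:ℤ))) := by
      rw [Real.log_zpow]; push_cast; push_cast at h1; linarith
    have h4 : (0:ℝ) < γdec ^ (-(m:ℤ)) := zpow_pos hdec0 _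
    calc γinc = Real.exp (Real.log γinc) := (Real.exp_log hinc0).symm
      _ = Real.exp (Real.log (γdec ^ (-(m:ℤ)))) := by rw [h3]
      _ = γdec ^ (-(m:ℤ)) := Real.exp_log h4
  -- step equations for e
  have hsucc : ∀ k, Θ k = 1 → e (k+1) = e k - m := by
    intro k hk; simp [he, expo, hk]
  have hfail : ∀ k, Θ k ≠ 1 → e (k+1) = e k + 1 := by
    intro k hk; simp [he, expo, hk]
  -- α formula
  have hαe : ∀ k, α k = α₀ * γdec ^ (e k) := by
    intro k
    induction k with
    | zero => simp [he, expo, hinit]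
    | succ k ih =>
      rw [hrec k]
      by_cases hk : Θ k = 1
      · rw [if_pos hk, hsucc k hk, ih, hγinc, sub_eq_add_neg,
          zpow_add₀ (ne_of_gt hdec0)]
        push_cast
        ring
      · rw [if_neg hk, hfail k hk, ih, zpow_add₀ (ne_of_gt hdec0), zpow_one]
        ring
  have hαpos : ∀ k, 0 < α k := by
    intro k; rw [hαe]; positivity
  -- threshold characterization
  have hthr : ∀ k, (α k ≤ abar ↔ C ≤ e k) := by
    intro k
    rw [hαe, hCdef, Int.ceil_le]
    have hp : (0:ℝ) < α₀ * γdec ^ (e k) := by positivity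
    rw [← Real.log_le_log_iff hp habar0, Real.log_mul (ne_of_gt hα₀)
      (ne_of_gt (zpow_pos hdec0 _)), Real.log_zpow,
      div_le_iff_of_neg hlogdec_neg]
    constructor
    · intro hx; linarith
    · intro hx; linarith
  have hC0 : 0 ≤ C := by
    rw [hCdef]
    apply Int.ceil_nonneg
    apply div_nonneg_iff.mpr
    right
    constructor
    · simp only [sub_nonpos]
      exact (Real.log_le_log_iff habar0 hα₀).2 habar
    · exact le_of_lt hlogdec_neg
  -- U characterization
  have hUsmall : ∀ k, (U k = 0 ↔ (C ≤ e k ∧ C ≤ e (k+1))) := by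
    intro k
    rw [hU k]
    by_cases hc : max (α k) (α (k+1)) ≤ abar
    · rw [if_pos hc]
      rw [max_le_iff] at hc
      exact iff_of_true rfl ⟨(hthr k).1 hc.1, (hthr (k+1)).1 hc.2⟩
    · rw [if_neg hc]
      refine iff_of_false (by norm_num) ?_
      rintro ⟨h1, h2⟩
      exact hc (max_le ((hthr k).2 h1) ((hthr (k+1)).2 h2))
  have hU01 : ∀ k, U k = 0 ∨ U k = 1 := by
    intro k; rw [hU k]; split <;> simp
  -- integer indicator counts
  set d1 : ℕ → ℤ := fun k => if Θ k = 1 ∧ U k = 1 then 1 else 0 with hd1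
  set d2 : ℕ → ℤ := fun k => if ¬ Θ k = 1 ∧ U k = 1 then 1 else 0 with hd2
  set d3 : ℕ → ℤ := fun k => if Θ k = 1 ∧ U k = 0 then 1 else 0 with hd3
  set d4 : ℕ → ℤ := fun k => if ¬ Θ k = 1 ∧ U k = 0 then 1 else 0 with hd4
  -- key1 : telescoping of Z
  have key1 : ∀ n, h * ((∑ k ∈ range n, d1 k : ℤ) : ℝ)
      ≤ Z 0 - Z n + ∑ k ∈ range n, (2 * εf + E k + Ep k) := by
    intro n
    induction n with
    | zero => simp
    | succ n ih =>
      rw [sum_range_succ, sum_range_succ]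
      by_cases hc : Θ n = 1 ∧ U n = 1
      · have hzz := hdown n hc.2 hc.1
        have hdn : d1 n = 1 := by simp only [hd1]; exact if_pos hc
        rw [hdn]
        push_cast at ih ⊢
        rw [mul_add, mul_one]
        linarith
      · have hzz := hup n
        have hdn : d1 n = 0 := by simp only [hd1]; exact if_neg hc
        rw [hdn]
        push_cast at ih ⊢
        rw [mul_add, mul_zero]
        linarith
  -- key2 : φ potential (min (e n) C)
  have step2 : ∀ k, min (e k) C + d2 k - m * d1 k ≤ min (e (k+1)) C := by
    intro k
    by_cases hc : Θ k = 1
    · have hek := hsucc k hc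
      have hd2z : d2 k = 0 := by simp [hd2, hc]
      rcases hU01 k with hu | hu
      · have hd1z : d1 k = 0 := by simp [hd1, hu]
        obtain ⟨h1, h2⟩ := (hUsmall k).1 hu
        rw [hd1z, hd2z, hek]
        rw [hek] at h2
        omega
      · have hd1o : d1 k = 1 := by simp [hd1, hc, hu]
        rw [hd1o, hd2z, hek]
        omega
    · have hek := hfail k hc
      have hd1z : d1 k = 0 := by simp [hd1, hc]
      rcases hU01 k with hu | hu
      · have hd2z : d2 k = 0 := by simp [hd2, hu]
        rw [hd1z, hd2z, hek]; omega
      · have hd2o : d2 k = 1 := by simp [hd2, hc, hu]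
        have hlt : e k < C := by
          by_contra hge
          push_neg at hge
          have h2 : C ≤ e (k+1) := by rw [hek]; omega
          have := (hUsmall k).2 ⟨hge, h2⟩
          rw [this] at hu; norm_num at hu
        rw [hd1z, hd2o, hek]; omega
  have key2 : ∀ n, (∑ k ∈ range n, d2 k) - m * (∑ k ∈ range n, d1 k)
      ≤ min (e n) C := by
    intro n
    induction n with
    | zero =>
      simp [show e 0 = 0 from rfl, min_eq_left hC0]
    | succ n ih =>
      rw [sum_range_succ, sum_range_succ, mul_add]
      linarith [step2 n, ih]
  -- key3 : ψ potential (max (e n) C)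
  have step3 : ∀ k, max (e (k+1)) C ≤ max (e k) C - m * d3 k + d4 k := by
    intro k
    by_cases hc : Θ k = 1
    · have hek := hsucc k hc
      have hd4z : d4 k = 0 := by simp [hd4, hc]
      rcases hU01 k with hu | hu
      · have hd3o : d3 k = 1 := by simp [hd3, hc, hu]
        obtain ⟨h1, h2⟩ := (hUsmall k).1 hu
        rw [hek] at h2 ⊢
        rw [hd3o, hd4z]
        omega
      · have hd3z : d3 k = 0 := by simp [hd3, hu]
        rw [hd3z, hd4z, hek]
        have hm' : (0:ℤ) ≤ m := by positivity
        omega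
    · have hek := hfail k hc
      have hd3z : d3 k = 0 := by simp [hd3, hc]
      rcases hU01 k with hu | hu
      · have hd4o : d4 k = 1 := by simp [hd4, hc, hu]
        rw [hd3z, hd4o, hek]; omega
      · have hd4z : d4 k = 0 := by simp [hd4, hu]
        have hlt : e k < C := by
          by_contra hge
          push_neg at hge
          have h2 : C ≤ e (k+1) := by rw [hek]; omega
          rcases hU01 k with hu0 | hu1
          · rw [hu0] at hu; norm_num at hu
          · exact absurd ((hUsmall k).2 ⟨hge, h2⟩ ▸ rfl : U k = 0)
              (by rw [hu1]; norm_num)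
        rw [hd3z, hd4z, hek]; omega
  have key3 : ∀ n, max (e n) C ≤ C - m * (∑ k ∈ range n, d3 k)
      + (∑ k ∈ range n, d4 k) := by
    intro n
    induction n with
    | zero =>
      simp [show e 0 = 0 from rfl, max_eq_right hC0]
    | succ n ih =>
      rw [sum_range_succ, sum_range_succ, mul_add]
      linarith [step3 n, ih]
  -- pointwise bound on I
  have key4 : ∀ k, I k ≤ ((d1 k + d2 k + d3 k : ℤ) : ℝ) := by
    intro k
    rcases hI k with hi | hi
    · rw [hi]
      have : (0:ℤ) ≤ d1 k + d2 k + d3 k := by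
        simp only [hd1, hd2, hd3]
        split_ifs <;> norm_num
      exact_mod_cast this
    · rw [hi]
      rcases hU01 k with hu | hu
      · have hs := hsmalltrue k hi hu
        have : d3 k = 1 := by simp [hd3, hs, hu]
        have h12 : (0:ℤ) ≤ d1 k + d2 k := by
          simp only [hd1, hd2]; split_ifs <;> norm_num
        have : (1:ℤ) ≤ d1 k + d2 k + d3 k := by omega
        exact_mod_cast this
      · by_cases hc : Θ k = 1
        · have : d1 k = 1 := by simp [hd1, hc, hu]
          have h23 : (0:ℤ) ≤ d2 k + d3 k := by
            simp only [hd2, hd3]; split_ifs <;> norm_num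
          have : (1:ℤ) ≤ d1 k + d2 k + d3 k := by omega
          exact_mod_cast this
        · have : d2 k = 1 := by simp [hd2, hc, hu]
          have h13 : (0:ℤ) ≤ d1 k + d3 k := by
            simp only [hd1, hd3]; split_ifs <;> norm_num
          have : (1:ℤ) ≤ d1 k + d2 k + d3 k := by omega
          exact_mod_cast this
  -- partition
  have key5 : ∀ k, d1 k + d2 k + d3 k + d4 k = 1 := by
    intro k
    simp only [hd1, hd2, hd3, hd4]
    rcases hU01 k with hu | hu <;> by_cases hc : Θ k = 1 <;>
      · simp [hu, hc]
  -- assemble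
  set N := fun k => 2 * εf + E k + Ep k with hN
  set a : ℤ := ∑ k ∈ range t, d1 k with ha
  set b : ℤ := ∑ k ∈ range t, d2 k with hb
  set s : ℤ := ∑ k ∈ range t, d3 k with hs
  set f : ℤ := ∑ k ∈ range t, d4 k with hf
  have hanneg : 0 ≤ a := by
    apply sum_nonneg; intro k _; simp only [hd1]; split_ifs <;> norm_num
  have hbnneg : 0 ≤ b := by
    apply sum_nonneg; intro k _; simp only [hd2]; split_ifs <;> norm_num
  have hsnneg : 0 ≤ s := by
    apply sum_nonneg; intro k _; simp only [hd3]; split_ifs <;> norm_num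
  have hfnneg : 0 ≤ f := by
    apply sum_nonneg; intro k _; simp only [hd4]; split_ifs <;> norm_num
  have hA1 : h * (a : ℝ) ≤ Z 0 + ∑ k ∈ range t, N k := by
    have := key1 t
    have hzt := hZ t
    linarith
  have hA2 : b ≤ C + m * a := by
    have h2 := key2 t
    have h2' : b - m * a ≤ C := le_trans h2 (min_le_right _ _)
    linarith
  have hA3 : (m:ℤ) * s ≤ f := by
    have h3 := key3 t
    have h3' : C ≤ max (e t) C := le_max_right _ _
    linarith
  have hA5 : a + b + s + f = t := by
    have h1 : ∑ k ∈ range t, (d1 k + d2 k + d3 k + d4 k) = (t:ℤ) := by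
      rw [Finset.sum_congr rfl (fun k _ => key5 k)]
      simp
    rw [sum_add_distrib, sum_add_distrib, sum_add_distrib] at h1
    exact h1
  have hA4 : ∑ k ∈ range t, I k ≤ ((a + b + s : ℤ) : ℝ) := by
    have h0 : ∑ k ∈ range t, I k ≤ ∑ k ∈ range t, ((d1 k + d2 k + d3 k : ℤ) : ℝ) :=
      sum_le_sum (fun k _ => key4 k)
    have h1 : ∑ k ∈ range t, ((d1 k + d2 k + d3 k : ℤ) : ℝ)
        = ((a + b + s : ℤ) : ℝ) := by
      rw [ha, hb, hs]
      push_cast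
      rw [sum_add_distrib, sum_add_distrib]
    linarith
  -- final arithmetic over ℝ
  have hm1 : (1:ℝ) ≤ m := by exact_mod_cast hm0
  have hmp1 : (0:ℝ) < (m:ℝ) + 1 := by linarith
  have haD : (a : ℝ) ≤ (Z 0 + ∑ k ∈ range t, N k) / h := by
    rw [le_div_iff₀ hh]; linarith [hA1]
  have hA2' : (b : ℝ) ≤ (C : ℝ) + (m:ℝ) * a := by exact_mod_cast hA2
  have hA3' : (m:ℝ) * s ≤ f := by exact_mod_cast hA3
  have hA5' : (a:ℝ) + b + s + f = t := by exact_mod_cast hA5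
  have hsnneg' : (0:ℝ) ≤ s := by exact_mod_cast hsnneg
  have hanneg' : (0:ℝ) ≤ a := by exact_mod_cast hanneg
  have hC0' : (0:ℝ) ≤ C := by exact_mod_cast hC0
  have hm0' : (0:ℝ) ≤ (m:ℝ) := by positivity
  have hmb : (m:ℝ) * b ≤ (m:ℝ) * ((C:ℝ) + (m:ℝ) * a) :=
    mul_le_mul_of_nonneg_left hA2' hm0'
  have hstep : ((m:ℝ)+1) * ((a:ℝ) + b + s) ≤ (m:ℝ)*((m:ℝ)+1)*a + (m:ℝ)*C + t := by
    nlinarith [hA3', hA5', hsnneg', hmb]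
  have hgoal : ∑ k ∈ range t, I k
      ≤ (m:ℝ) * ((Z 0 + ∑ k ∈ range t, N k) / h)
        + ((m:ℝ) / ((m:ℝ)+1)) * (C:ℝ) + (t:ℝ) / ((m:ℝ)+1) := by
    have h1 : ∑ k ∈ range t, I k ≤ (a:ℝ) + b + s := by
      have := hA4; push_cast at this; linarith
    have h2 : (a:ℝ) + b + s
        ≤ ((m:ℝ)*((m:ℝ)+1)*a + (m:ℝ)*C + t) / ((m:ℝ)+1) := by
      rw [le_div_iff₀ hmp1]
      linarith [hstep]
    have heq : ((m:ℝ)*((m:ℝ)+1)*a + (m:ℝ)*C + t) / ((m:ℝ)+1)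
        = (m:ℝ)*a + ((m:ℝ)/((m:ℝ)+1))*C + (t:ℝ)/((m:ℝ)+1) := by
      field_simp
    have h3 : (m:ℝ)*a ≤ (m:ℝ) * ((Z 0 + ∑ k ∈ range t, N k) / h) :=
      mul_le_mul_of_nonneg_left haD (by positivity)
    linarith
  exact hgoal
end

section
/- Suppose the trial step s ∈ ℝⁿ satisfies the fraction-of-Cauchy-decrease condition m(x) − m(x+s) ≥ (κ_fcd/2)·‖g‖·min{‖g‖/‖H‖, α}, suppose ‖g‖ ≥ η₂ α, suppose the trust-region acceptance test holds, i.e. f − f⁺ + 2ε_f ≥ η₁ (m(x) − m(x+s)), and suppose |f − φ(x)| ≤ e and |f⁺ − φ(x+s)| ≤ e⁺ for some e, e⁺ ≥ 0. Then φ(x) − φ(x+s) ≥ C_prog · α² − (2ε_f + e + e⁺), where C_prog = (1/2)·η₁·η₂·κ_fcd·min{η₂/κ_H, 1}. -/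
open RealInnerProductSpace Classical

/-- A successful trust-region iteration (fraction-of-Cauchy-decrease step, gradient-norm
condition, acceptance test, and bounded function-value estimation errors) decreases the
true objective by at least C_prog·α² − (2ε_f + e + e⁺). -/
theorem trust_region_large_successful_progress
    (n : ℕ) (hn : 1 ≤ n)
    (φ : EuclideanSpace ℝ (Fin n) → ℝ)
    (η₁ η₂ κfcd κH εf : ℝ)
    (hη₁ : η₁ ∈ Set.Ioo (0 : ℝ) 1) (hη₂ : 0 < η₂) (hκfcd : κfcd ∈ Set.Ioc (0 : ℝ) 1)
    (hκH : 0 < κH) (hεf : 0 ≤ εf)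
    (x s g : EuclideanSpace ℝ (Fin n)) (α : ℝ) (hα : 0 < α)
    (H : EuclideanSpace ℝ (Fin n) →L[ℝ] EuclideanSpace ℝ (Fin n)) (hH : ‖H‖ ≤ κH)
    (f fp e ep : ℝ) (he : 0 ≤ e) (hep : 0 ≤ ep)
    (hfcd : κfcd / 2 * ‖g‖ * (if H = 0 then α else min (‖g‖ / ‖H‖) α)
      ≤ -⟪g, s⟫ - 1 / 2 * ⟪s, H s⟫)
    (hgα : η₂ * α ≤ ‖g‖)
    (hacc : η₁ * (-⟪g, s⟫ - 1 / 2 * ⟪s, H s⟫) ≤ f - fp + 2 * εf)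
    (hfe : |f - φ x| ≤ e) (hfpe : |fp - φ (x + s)| ≤ ep) :
    1 / 2 * η₁ * η₂ * κfcd * min (η₂ / κH) 1 * α ^ 2 - (2 * εf + e + ep)
      ≤ φ x - φ (x + s) := by
  obtain ⟨hη₁0, hη₁1⟩ := hη₁
  obtain ⟨hκfcd0, hκfcd1⟩ := hκfcd
  set M := if H = 0 then α else min (‖g‖ / ‖H‖) α with hM
  have hmin : min (η₂ / κH) 1 * α ≤ M := by
    by_cases h0 : H = 0
    · simp only [hM, h0, if_true]
      nlinarith [min_le_right (η₂ / κH) (1:ℝ)]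
    · simp only [hM, h0, if_false]
      have hHn : 0 < ‖H‖ := norm_pos_iff.mpr h0
      apply le_min
      · have h1 : min (η₂ / κH) 1 * α ≤ η₂ / κH * α :=
          mul_le_mul_of_nonneg_right (min_le_left _ _) hα.le
        have h2 : η₂ / κH * α ≤ η₂ * α / ‖H‖ := by
          rw [div_mul_eq_mul_div, div_le_div_iff₀ hκH hHn]
          nlinarith [mul_le_mul_of_nonneg_left hH (by positivity : (0:ℝ) ≤ η₂ * α)]
        have h3 : η₂ * α / ‖H‖ ≤ ‖g‖ / ‖H‖ := div_le_div_of_nonneg_right hgα hHn.le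
        linarith
      · nlinarith [min_le_right (η₂ / κH) (1:ℝ)]
    
  have hgpos : 0 ≤ ‖g‖ := norm_nonneg g
  have hminpos : 0 ≤ min (η₂ / κH) 1 := le_min (by positivity) zero_le_one
  have key : 1 / 2 * η₂ * κfcd * min (η₂ / κH) 1 * α ^ 2 ≤ κfcd / 2 * ‖g‖ * M := by
    have : κfcd / 2 * (η₂ * α) * (min (η₂ / κH) 1 * α) ≤ κfcd / 2 * ‖g‖ * M := by
      have hMnn : 0 ≤ min (η₂ / κH) 1 * α := by positivity
      have h1 : κfcd / 2 * (η₂ * α) * (min (η₂ / κH) 1 * α)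
          ≤ κfcd / 2 * ‖g‖ * (min (η₂ / κH) 1 * α) :=
        mul_le_mul_of_nonneg_right (mul_le_mul_of_nonneg_left hgα (by positivity)) hMnn
      have h2 : κfcd / 2 * ‖g‖ * (min (η₂ / κH) 1 * α) ≤ κfcd / 2 * ‖g‖ * M := by
        apply mul_le_mul_of_nonneg_left hmin; positivity
      linarith
    nlinarith [this]
  have key2 : η₁ * (1 / 2 * η₂ * κfcd * min (η₂ / κH) 1 * α ^ 2)
      ≤ η₁ * (-⟪g, s⟫ - 1 / 2 * ⟪s, H s⟫) := by
    apply mul_le_mul_of_nonneg_left (key.trans hfcd) hη₁0.le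
  have h1 : f - φ x ≤ e := (abs_le.mp hfe).2
  have h2 : -(ep) ≤ fp - φ (x + s) := (abs_le.mp hfpe).1
  nlinarith [key2, hacc]
end

section
/- Let x, g ∈ ℝⁿ, α > 0, and set x⁺ = x − αg. Suppose ‖g − ∇φ(x)‖ ≤ max{ε_g, min{τ, κα}·‖g‖} with ε_g ≤ η‖∇φ(x)‖, and suppose α ≤ min{(1−θ)/(L/2 + κ), 2(1 − 2η − θ(1−η))/(L(1−η))}. Then φ(x⁺) ≤ φ(x) − θα‖g‖². Consequently, for any scalars f, f⁺ with |f − φ(x)| + |f⁺ − φ(x⁺)| ≤ 2ε_f (where ε_f ≥ 0), the sufficient-decrease test f⁺ ≤ f − θα‖g‖² + 2ε_f of the line-search algorithm holds. -/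
/-!
By the descent lemma, the step `x - α • g` decreases `φ` by at least `α ‖g‖² (1 - e - L α / 2)`
as soon as `‖g - ∇φ x‖ ≤ e ‖g‖`. A true iteration gives `e = η / (1 - η)` (because
`‖∇φ x‖ ≤ ‖g‖ + ‖g - ∇φ x‖`), a small one gives `e = κ α`, and the matching step-size bound makes
`1 - e - L α / 2 ≥ θ`. The acceptance test then follows by the triangle inequality.
-/

open InnerProductSpace

section Descent

variable {E : Type*} [NormedAddCommGroup E] [InnerProductSpace ℝ E] [CompleteSpace E]
  {φ : E → ℝ} {L : ℝ}

theorem le_add_inner_gradient_add_of_lipschitz_gradient (hdiff : Differentiable ℝ φ)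
    (hlip : ∀ y z, ‖gradient φ y - gradient φ z‖ ≤ L * ‖y - z‖) (x v : E) :
    φ (x + v) ≤ φ x + ⟪gradient φ x, v⟫_ℝ + L / 2 * ‖v‖ ^ 2 := by
  -- `ψ t := φ (x + t v) - t ⟪∇φ x, v⟫ - t² L ‖v‖² / 2` is antitone on `t ≥ 0`.
  set ψ : ℝ → ℝ := fun t => φ (x + t • v) - t * ⟪gradient φ x, v⟫_ℝ - t ^ 2 * (L / 2 * ‖v‖ ^ 2)
  have hψ : ∀ t, HasDerivAt ψ
      (⟪gradient φ (x + t • v) - gradient φ x, v⟫_ℝ - L * t * ‖v‖ ^ 2) t := fun t => by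
    have hline : HasDerivAt (fun s : ℝ => x + s • v) v t := by
      simpa using ((hasDerivAt_id t).smul_const v).const_add x
    have hφ := (hdiff (x + t • v)).hasGradientAt.hasFDerivAt.comp_hasDerivAt t hline
    refine ((hφ.sub ((hasDerivAt_id t).mul_const ⟪gradient φ x, v⟫_ℝ)).sub
      ((hasDerivAt_pow 2 t).mul_const (L / 2 * ‖v‖ ^ 2))).congr_deriv ?_
    simp only [toDual_apply_apply, inner_sub_left]
    ring
  have hanti : AntitoneOn ψ (Set.Ici 0) := by
    refine antitoneOn_of_hasDerivWithinAt_nonpos (convex_Ici 0)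
      (HasDerivAt.continuousOn fun t _ => hψ t) (fun t _ => (hψ t).hasDerivWithinAt) ?_
    intro t ht
    rw [interior_Ici, Set.mem_Ioi] at ht
    rw [sub_nonpos]
    calc ⟪gradient φ (x + t • v) - gradient φ x, v⟫_ℝ
        ≤ ‖gradient φ (x + t • v) - gradient φ x‖ * ‖v‖ := real_inner_le_norm _ _
      _ ≤ L * ‖x + t • v - x‖ * ‖v‖ := by gcongr; exact hlip _ _
      _ = L * t * ‖v‖ ^ 2 := by
        rw [add_sub_cancel_left, norm_smul, Real.norm_of_nonneg ht.le]; ring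
  have := hanti Set.self_mem_Ici (Set.mem_Ici.2 zero_le_one) zero_le_one
  simp only [ψ, zero_smul, add_zero, one_smul, zero_mul, one_mul] at this
  linarith

theorem sufficient_decrease_of_relative_gradient_error (hdiff : Differentiable ℝ φ)
    (hlip : ∀ y z, ‖gradient φ y - gradient φ z‖ ≤ L * ‖y - z‖) {x g : E} {α θ e : ℝ}
    (hα : 0 ≤ α) (herr : ‖g - gradient φ x‖ ≤ e * ‖g‖) (he : e + L * α / 2 ≤ 1 - θ) :
    φ (x - α • g) ≤ φ x - θ * α * ‖g‖ ^ 2 := by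
  have hdesc := le_add_inner_gradient_add_of_lipschitz_gradient hdiff hlip x (-(α • g))
  rw [← sub_eq_add_neg, norm_neg, norm_smul, Real.norm_of_nonneg hα, inner_neg_right,
    real_inner_smul_right] at hdesc
  have hinner : ‖g‖ ^ 2 - e * ‖g‖ ^ 2 ≤ ⟪gradient φ x, g⟫_ℝ := by
    have := real_inner_le_norm (g - gradient φ x) g
    rw [inner_sub_left, real_inner_self_eq_norm_sq] at this
    nlinarith [mul_le_mul_of_nonneg_right herr (norm_nonneg g)]
  nlinarith [mul_le_mul_of_nonneg_left hinner hα, sq_nonneg ‖g‖, mul_nonneg hα (sq_nonneg ‖g‖)]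

end Descent

theorem norm_sub_le_div_one_sub_mul_norm {F : Type*} [SeminormedAddCommGroup F] {a b : F}
    {η : ℝ} (hη : 0 ≤ η) (hη1 : η < 1) (h : ‖a - b‖ ≤ η * ‖b‖) :
    ‖a - b‖ ≤ η / (1 - η) * ‖a‖ := by
  rw [div_mul_eq_mul_div, le_div_iff₀ (sub_pos.2 hη1)]
  nlinarith [mul_le_mul_of_nonneg_left (norm_le_insert a b) hη]

theorem div_one_sub_add_le_of_le_div {L α η θ : ℝ} (hL : 0 < L) (hη1 : η < 1)
    (hα : α ≤ 2 * (1 - 2 * η - θ * (1 - η)) / (L * (1 - η))) :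
    η / (1 - η) + L * α / 2 ≤ 1 - θ := by
  have h1η : 0 < 1 - η := sub_pos.2 hη1
  rw [le_div_iff₀ (mul_pos hL h1η)] at hα
  rw [div_add' _ _ _ h1η.ne', div_le_iff₀ h1η]
  linarith

theorem le_sub_add_of_abs_sub_add_abs_sub_le {a a' f f' d ε : ℝ} (hdec : a' ≤ a - d)
    (h : |f - a| + |f' - a'| ≤ 2 * ε) : f' ≤ f - d + 2 * ε := by
  linarith [le_abs_self (f' - a'), neg_abs_le (f - a)]

theorem line_search_small_true_sufficient_decrease_general
    (n : ℕ) (φ : EuclideanSpace ℝ (Fin n) → ℝ) (L : ℝ) (hL : 0 < L)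
    (hdiff : Differentiable ℝ φ)
    (hlip : ∀ y z, ‖gradient φ y - gradient φ z‖ ≤ L * ‖y - z‖)
    (θ κ τ εg εf η : ℝ)
    (hθ : θ ∈ Set.Ioo (0 : ℝ) 1) (hκ : 0 ≤ κ)
    (hη : 0 < η) (hη' : η < (1 - θ) / (2 - θ))
    (x g : EuclideanSpace ℝ (Fin n)) (α : ℝ) (hα : 0 < α)
    (hacc : ‖g - gradient φ x‖ ≤ max εg (min τ (κ * α) * ‖g‖))
    (hεgb : εg ≤ η * ‖gradient φ x‖)
    (hαb : α ≤ min ((1 - θ) / (L / 2 + κ)) (2 * (1 - 2 * η - θ * (1 - η)) / (L * (1 - η)))) :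
    φ (x - α • g) ≤ φ x - θ * α * ‖g‖ ^ 2 ∧
    ∀ f fp : ℝ, |f - φ x| + |fp - φ (x - α • g)| ≤ 2 * εf →
      fp ≤ f - θ * α * ‖g‖ ^ 2 + 2 * εf := by
  obtain ⟨hθ0, hθ1⟩ := hθ
  have hη1 : η < 1 := hη'.trans ((div_lt_one (by linarith)).2 (by linarith))
  have hdec : φ (x - α • g) ≤ φ x - θ * α * ‖g‖ ^ 2 := by
    rcases le_max_iff.1 hacc with htrue | hsmall
    · exact sufficient_decrease_of_relative_gradient_error hdiff hlip hα.le
        (norm_sub_le_div_one_sub_mul_norm hη.le hη1 (htrue.trans hεgb))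
        (div_one_sub_add_le_of_le_div hL hη1 (hαb.trans (min_le_right _ _)))
    · refine sufficient_decrease_of_relative_gradient_error hdiff hlip hα.le
        (hsmall.trans (mul_le_mul_of_nonneg_right (min_le_right _ _) (norm_nonneg g))) ?_
      have hα1 := hαb.trans (min_le_left _ _)
      rw [le_div_iff₀ (by positivity)] at hα1
      linarith
  exact ⟨hdec, fun f fp h => le_sub_add_of_abs_sub_add_abs_sub_le hdec h⟩

/-- Every true and small iteration of the stochastic line-search method satisfies the
sufficient-decrease acceptance test. -/
theorem line_search_small_true_sufficient_decrease
    (n : ℕ) (φ : EuclideanSpace ℝ (Fin n) → ℝ) (L : ℝ) (hL : 0 < L)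
    (hdiff : Differentiable ℝ φ)
    (hlip : ∀ y z, ‖gradient φ y - gradient φ z‖ ≤ L * ‖y - z‖)
    (θ κ τ εg εf η : ℝ)
    (hθ : θ ∈ Set.Ioo (0 : ℝ) 1) (hκ : 0 ≤ κ) (hτ : 0 ≤ τ) (hεg : 0 ≤ εg)
    (hεf : 0 ≤ εf) (hη : 0 < η) (hη' : η < (1 - θ) / (2 - θ))
    (x g : EuclideanSpace ℝ (Fin n)) (α : ℝ) (hα : 0 < α)
    (hacc : ‖g - gradient φ x‖ ≤ max εg (min τ (κ * α) * ‖g‖))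
    (hεgb : εg ≤ η * ‖gradient φ x‖)
    (hαb : α ≤ min ((1 - θ) / (L / 2 + κ)) (2 * (1 - 2 * η - θ * (1 - η)) / (L * (1 - η)))) :
    φ (x - α • g) ≤ φ x - θ * α * ‖g‖ ^ 2 ∧
    ∀ f fp : ℝ, |f - φ x| + |fp - φ (x - α • g)| ≤ 2 * εf →
      fp ≤ f - θ * α * ‖g‖ ^ 2 + 2 * εf :=
  line_search_small_true_sufficient_decrease_general n φ L hL hdiff hlip θ κ τ εg εf η hθ hκ hη hη'
    x g α hα hacc hεgb hαb
end

section
/- Let g, v ∈ ℝⁿ, let τ ≥ 0, η ∈ (0,1), ε_g ≥ 0, and let c ∈ [0, τ]. If ‖g − v‖ ≤ max{ε_g, c‖g‖} and ε_g ≤ η‖v‖, then ‖g‖ ≥ min{1/(1+τ), 1−η}·‖v‖. -/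
/-- Lower bound on the norm of the gradient estimate in terms of the true gradient norm,
used to verify the non-rejection criterion of the line-search method. -/
theorem line_search_gradient_lower_bound
    (n : ℕ) (g v : EuclideanSpace ℝ (Fin n))
    (τ η εg c : ℝ)
    (hτ : 0 ≤ τ) (hη : η ∈ Set.Ioo (0 : ℝ) 1) (hεg : 0 ≤ εg)
    (hc : c ∈ Set.Icc (0 : ℝ) τ)
    (h₁ : ‖g - v‖ ≤ max εg (c * ‖g‖))
    (h₂ : εg ≤ η * ‖v‖) :
    min (1 / (1 + τ)) (1 - η) * ‖v‖ ≤ ‖g‖ := by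
  obtain ⟨hη0, hη1⟩ := hη
  obtain ⟨hc0, hcτ⟩ := hc
  have hng : (0:ℝ) ≤ ‖g‖ := norm_nonneg _
  have hnv : (0:ℝ) ≤ ‖v‖ := norm_nonneg _
  have htri : ‖v‖ ≤ ‖g‖ + ‖g - v‖ := by
    calc ‖v‖ = ‖g - (g - v)‖ := by rw [show g - (g - v) = v by abel]
      _ ≤ ‖g‖ + ‖g - v‖ := norm_sub_le _ _
  rcases max_cases εg (c * ‖g‖) with ⟨hm, _⟩ | ⟨hm, _⟩
  · -- ‖g - v‖ ≤ εg ≤ η‖v‖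
    have : (1 - η) * ‖v‖ ≤ ‖g‖ := by nlinarith [hm ▸ h₁]
    calc min (1 / (1 + τ)) (1 - η) * ‖v‖ ≤ (1 - η) * ‖v‖ := by
          apply mul_le_mul_of_nonneg_right (min_le_right _ _) hnv
      _ ≤ ‖g‖ := this
  · have hcg : ‖g - v‖ ≤ τ * ‖g‖ := by
      calc ‖g - v‖ ≤ c * ‖g‖ := hm ▸ h₁
        _ ≤ τ * ‖g‖ := mul_le_mul_of_nonneg_right hcτ hng
    have h1τ : (0:ℝ) < 1 + τ := by linarith
    have : ‖v‖ ≤ (1 + τ) * ‖g‖ := by linarith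
    have : 1 / (1 + τ) * ‖v‖ ≤ ‖g‖ := by
      rw [div_mul_eq_mul_div, div_le_iff₀ h1τ]
      linarith
    calc min (1 / (1 + τ)) (1 - η) * ‖v‖ ≤ 1 / (1 + τ) * ‖v‖ := by
          apply mul_le_mul_of_nonneg_right (min_le_left _ _) hnv
      _ ≤ ‖g‖ := this
end
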